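/- Let D ≥ 2, γ ∈ [0,1], and n⁻, n⁰, n⁺ ∈ ℕ^p. If n⁰ = 0 then k^D_{D−2,γ}(n⁻, n⁰, n⁺) = 1. If n⁰ ≠ 0 then, writing c = 1 − (1−γ)·P_D, S = Σ_{i : n_i ≠ 0} w_i·(1 − n⁰_i/n_i), H_m = Σ_{k=1}^m 1/k (the m-th harmonic number, H_0 = 0), {x | E} = E if x > 0 and 0 if x = 0, and W_i⁻ (resp. W_i⁺) for W evaluated at the total-count vector n with its i-th entry replaced by n⁰_i + n⁺_i (resp. by n⁰_i + n⁻_i), one has the non-recursive closed form: k^D_{D−2,γ}(n⁻, n⁰, n⁺) = 1 − P_{D−2}·[ 1 − (1/W(n))·[ (1 − P_{D−1})·S + P_{D−1}·c·Σ_{i : n_i ≠ 0} (w_i/n_i)·( (S + w_i·n⁰_i/n_i)·(1/W_i⁻ + 1/W_i⁺ + (n⁻_i + n⁺_i − 2)/W(n)) + (w_i/W_i⁻)·({n⁰_i + n⁺_i | n⁺_i/(n⁰_i + n⁺_i)} − 1) + (w_i/W_i⁺)·({n⁰_i + n⁻_i | n⁻_i/(n⁰_i + n⁻_i)} − 1)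 − (w_i·n⁰_i/W(n))·((H_{n_i−1} − H_{n⁰_i + n⁺_i}) + (H_{n_i−1} − H_{n⁰_i + n⁻_i})) ) ] ]. -/
import Mathlib


/-- Total weight `W(v) = Σ_{i : v_i ≠ 0} w_i` of the axes with at least one available split. -/
noncomputable def bartW (p : ℕ) (w : Fin p → ℝ) (v : Fin p → ℕ) : ℝ :=
  ∑ i ∈ Finset.univ.filter (fun i => v i ≠ 0), w i


/-- The truncated BART sub-correlation function `k^D_{d,γ}`: same recursion as `k_d` for
`d < D`, with base cases `1` if `n = 0`, `1` at depth `D` if `n⁰ = 0`, and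
`1 - (1-γ)·P_D` at depth `D` if `n⁰ ≠ 0`. -/
noncomputable def bartKT (p : ℕ) (w : Fin p → ℝ) (P : ℕ → ℝ) (D : ℕ) (γ : ℝ)
    (d : ℕ) (nm n0 np : Fin p → ℕ) : ℝ :=
  if ∀ i, nm i + n0 i + np i = 0 then 1
  else if D ≤ d then
    (if ∀ i, n0 i = 0 then 1 else 1 - (1 - γ) * P D)
  else
    1 - P d * (1 - (1 / bartW p w (fun i => nm i + n0 i + np i)) *
      ∑ i ∈ Finset.univ.filter (fun i => nm i + n0 i + np i ≠ 0),
        (w i / ((nm i + n0 i + np i : ℕ) : ℝ)) *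
          ((∑ k ∈ Finset.range (nm i),
              bartKT p w P D γ (d+1) (Function.update nm i k) n0 np) +
           (∑ k ∈ Finset.range (np i),
              bartKT p w P D γ (d+1) nm n0 (Function.update np i k))))
termination_by D - d
decreasing_by all_goals omega

/-- The `m`-th harmonic number `H_m = Σ_{k=1}^m 1/k` (with `H_0 = 0`). -/
noncomputable def harm (m : ℕ) : ℝ := ∑ k ∈ Finset.range m, (1 : ℝ) / (k + 1)

lemma bartW_eq (p : ℕ) (w : Fin p → ℝ) (v : Fin p → ℕ) :
    bartW p w v = ∑ j, if v j ≠ 0 then w j else 0 := by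
  rw [bartW, Finset.sum_filter]

lemma bartW_pos {p : ℕ} {w : Fin p → ℝ} (hw : ∀ i, 0 < w i) {v : Fin p → ℕ}
    (h : ∃ j, v j ≠ 0) : 0 < bartW p w v := by
  obtain ⟨j, hj⟩ := h
  exact Finset.sum_pos (fun i _ => hw i)
    ⟨j, Finset.mem_filter.2 ⟨Finset.mem_univ j, hj⟩⟩

lemma bartW_update {p : ℕ} {w : Fin p → ℝ} {v : Fin p → ℕ} {i : Fin p}
    (hi : v i ≠ 0) (m : ℕ) :
    bartW p w (Function.update v i m)
      = if m = 0 then bartW p w v - w i else bartW p w v := by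
  rw [bartW_eq, bartW_eq]
  have h1 : (∑ j, if Function.update v i m j ≠ 0 then w j else 0)
      = ∑ j, Function.update (fun j => if v j ≠ 0 then w j else 0) i
          (if m ≠ 0 then w i else 0) j :=
    Finset.sum_congr rfl (fun j _ => by
      rcases eq_or_ne j i with rfl | hj
      · simp
      · simp [Function.update_of_ne hj])
  rw [h1, Finset.sum_update_of_mem (Finset.mem_univ i),
    Finset.sum_eq_sum_sdiff_singleton_add (Finset.mem_univ i)
      (fun j => if v j ≠ 0 then w j else 0)]
  rcases eq_or_ne m 0 with rfl | hm
  · simp [hi]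
  · simp [hm, hi]

noncomputable def bartT (p : ℕ) (w : Fin p → ℝ) (n0 v : Fin p → ℕ) : ℝ :=
  ∑ j ∈ Finset.univ.filter (fun j => v j ≠ 0), w j * (1 - (n0 j : ℝ) / (v j : ℝ))

lemma bartT_eq (p : ℕ) (w : Fin p → ℝ) (n0 v : Fin p → ℕ) :
    bartT p w n0 v = ∑ j, if v j ≠ 0 then w j * (1 - (n0 j : ℝ) / (v j : ℝ)) else 0 := by
  rw [bartT, Finset.sum_filter]

lemma bartT_update {p : ℕ} {w : Fin p → ℝ} {n0 : Fin p → ℕ} {v : Fin p → ℕ} {i : Fin p}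
    (hi : v i ≠ 0) (m : ℕ) :
    bartT p w n0 (Function.update v i m)
      = bartT p w n0 v - w i * (1 - (n0 i : ℝ) / (v i : ℝ))
        + (if m = 0 then 0 else w i * (1 - (n0 i : ℝ) / (m : ℝ))) := by
  rw [bartT_eq, bartT_eq]
  have h1 : (∑ j, if Function.update v i m j ≠ 0 then
        w j * (1 - (n0 j : ℝ) / (Function.update v i m j : ℝ)) else 0)
      = ∑ j, Function.update (fun j => if v j ≠ 0 then w j * (1 - (n0 j : ℝ) / (v j : ℝ)) else 0) i
          (if m ≠ 0 then w i * (1 - (n0 i : ℝ) / (m : ℝ)) else 0) j :=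
    Finset.sum_congr rfl (fun j _ => by
      rcases eq_or_ne j i with rfl | hj
      · simp
      · simp [Function.update_of_ne hj])
  rw [h1, Finset.sum_update_of_mem (Finset.mem_univ i),
    Finset.sum_eq_sum_sdiff_singleton_add (Finset.mem_univ i)
      (fun j => if v j ≠ 0 then w j * (1 - (n0 j : ℝ) / (v j : ℝ)) else 0)]
  rcases eq_or_ne m 0 with rfl | hm
  · simp [hi]
  · simp [hm, hi]; ring

lemma harm_succ (m : ℕ) : harm (m + 1) = harm m + 1 / ((m : ℝ) + 1) := by
  rw [harm, harm, Finset.sum_range_succ]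
lemma side_sum (A u W W' : ℝ) (hW : W ≠ 0) (hW' : W' ≠ 0) (ν b : ℕ)
    (hWW : ν + b ≠ 0 → W' = W) :
    ∀ c : ℕ, ν + b + c ≠ 0 →
    (∑ k ∈ Finset.range c,
        (if k + (ν + b) = 0 then (A - u) / W'
         else (A - u * (ν : ℝ) / ((k + (ν + b) : ℕ) : ℝ)) / W))
      = A / W' + A * ((c : ℝ) - 1) / W
        + (u / W') * ((if 0 < ν + b then (b : ℝ) / ((ν + b : ℕ) : ℝ) else 0) - 1)
        - (u * (ν : ℝ) / W) * (harm (ν + b + c - 1) - harm (ν + b)) := by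
  intro c
  induction c with
  | zero =>
    intro h
    have ha : ν + b ≠ 0 := by omega
    rw [hWW ha, if_pos (Nat.pos_of_ne_zero ha)]
    have hab : ((ν + b : ℕ) : ℝ) ≠ 0 := Nat.cast_ne_zero.2 ha
    have hh : harm (ν + b) = harm (ν + b - 1) + 1 / (((ν + b - 1 : ℕ) : ℝ) + 1) := by
      rw [← harm_succ]; congr 1; omega
    have hc : ((ν + b - 1 : ℕ) : ℝ) + 1 = ((ν + b : ℕ) : ℝ) := by
      push_cast [Nat.cast_sub (by omega : 1 ≤ ν + b)]; ring
    rw [Nat.add_zero, Finset.sum_range_zero, hh, hc]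
    have hab2 : (ν : ℝ) + (b : ℝ) ≠ 0 := by
      have := hab; push_cast at this; exact this
    push_cast
    field_simp
    ring
  | succ c ih =>
    intro _
    rcases eq_or_ne (ν + b + c) 0 with h0 | h0
    · have hν : ν = 0 := by omega
      have hb : b = 0 := by omega
      have hc : c = 0 := by omega
      subst hν; subst hb; subst hc
      simp [harm]
      ring
    · rw [Finset.sum_range_succ, ih h0]
      have hm : c + (ν + b) ≠ 0 := by omega
      rw [if_neg hm]
      have h1 : ν + b + (c + 1) - 1 = (ν + b + c - 1) + 1 := by omega
      rw [h1, harm_succ]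
      have h2 : ((ν + b + c - 1 : ℕ) : ℝ) + 1 = ((c + (ν + b) : ℕ) : ℝ) := by
        push_cast [Nat.cast_sub (by omega : 1 ≤ ν + b + c)]; ring
      rw [h2]
      have h3 : ((c + (ν + b) : ℕ) : ℝ) ≠ 0 := Nat.cast_ne_zero.2 hm
      push_cast at h3 ⊢
      field_simp
      ring
lemma kt_n0_zero {p : ℕ} {w : Fin p → ℝ} (hw : ∀ i, 0 < w i) (P : ℕ → ℝ) (D : ℕ) (γ : ℝ)
    {n0 : Fin p → ℕ} (hn0 : ∀ i, n0 i = 0) :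
    ∀ e d, D - d ≤ e → ∀ nm np, bartKT p w P D γ d nm n0 np = 1 := by
  intro e
  induction e with
  | zero =>
    intro d hd nm np
    rw [bartKT]
    rcases Classical.em (∀ i, nm i + n0 i + np i = 0) with h | h
    · rw [if_pos h]
    · rw [if_neg h, if_pos (by omega), if_pos hn0]
  | succ e ih =>
    intro d hd nm np
    rw [bartKT]
    rcases Classical.em (∀ i, nm i + n0 i + np i = 0) with h | h
    · rw [if_pos h]
    · rw [if_neg h]
      rcases Classical.em (D ≤ d) with h2 | h2
      · rw [if_pos h2, if_pos hn0]
      · rw [if_neg h2]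
        have hrec : ∀ nm' np', bartKT p w P D γ (d + 1) nm' n0 np' = 1 :=
          fun nm' np' => ih (d + 1) (by omega) nm' np'
        have hsum : (∑ i ∈ Finset.univ.filter (fun i => nm i + n0 i + np i ≠ 0),
            (w i / ((nm i + n0 i + np i : ℕ) : ℝ)) *
              ((∑ k ∈ Finset.range (nm i), bartKT p w P D γ (d+1) (Function.update nm i k) n0 np) +
               (∑ k ∈ Finset.range (np i), bartKT p w P D γ (d+1) nm n0 (Function.update np i k))))
            = bartW p w (fun i => nm i + n0 i + np i) := by
          rw [bartW]
          refine Finset.sum_congr rfl (fun i hi => ?_)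
          have hi' : nm i + n0 i + np i ≠ 0 := (Finset.mem_filter.1 hi).2
          have hcast : ((nm i + n0 i + np i : ℕ) : ℝ) ≠ 0 := Nat.cast_ne_zero.2 hi'
          simp only [hrec, Finset.sum_const, Finset.card_range, nsmul_eq_mul, mul_one]
          rw [div_mul_eq_mul_div, div_eq_iff hcast]
          have : n0 i = 0 := hn0 i
          push_cast [this]
          ring
        rw [hsum, one_div, inv_mul_cancel₀
          (ne_of_gt (bartW_pos hw (by push_neg at h; exact h)))]
        simp

lemma kt_depth_D {p : ℕ} (w : Fin p → ℝ) (P : ℕ → ℝ) (D : ℕ) (γ : ℝ)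
    {n0 : Fin p → ℕ} (hn0 : ∃ j, n0 j ≠ 0) (nm np : Fin p → ℕ) :
    bartKT p w P D γ D nm n0 np = 1 - (1 - γ) * P D := by
  obtain ⟨j, hj⟩ := hn0
  rw [bartKT, if_neg (fun h => hj (by have := h j; omega)), if_pos le_rfl,
    if_neg (fun h => hj (h j))]

lemma kt_depth_D_sub_one {p : ℕ} {w : Fin p → ℝ} (hw : ∀ i, 0 < w i)
    (P : ℕ → ℝ) {D : ℕ} (hD : 1 ≤ D) (γ : ℝ)
    {n0 : Fin p → ℕ} (hn0 : ∃ j, n0 j ≠ 0) (nm np : Fin p → ℕ) :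
    bartKT p w P D γ (D - 1) nm n0 np
      = 1 - P (D - 1) * (1 - (1 / bartW p w (fun j => nm j + n0 j + np j)) *
          ((1 - (1 - γ) * P D) * bartT p w n0 (fun j => nm j + n0 j + np j))) := by
  obtain ⟨j, hj⟩ := hn0
  have key : (∑ i ∈ Finset.univ.filter (fun i => nm i + n0 i + np i ≠ 0),
      (w i / ((nm i + n0 i + np i : ℕ) : ℝ)) *
        ((∑ k ∈ Finset.range (nm i),
            bartKT p w P D γ ((D - 1) + 1) (Function.update nm i k) n0 np) +
         (∑ k ∈ Finset.range (np i),
            bartKT p w P D γ ((D - 1) + 1) nm n0 (Function.update np i k))))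
      = (1 - (1 - γ) * P D) * bartT p w n0 (fun j => nm j + n0 j + np j) := by
    rw [show D - 1 + 1 = D from by omega, bartT, Finset.mul_sum]
    refine Finset.sum_congr rfl (fun i hi => ?_)
    have hi' : nm i + n0 i + np i ≠ 0 := (Finset.mem_filter.1 hi).2
    have hcast : ((nm i + n0 i + np i : ℕ) : ℝ) ≠ 0 := Nat.cast_ne_zero.2 hi'
    simp only [kt_depth_D w P D γ ⟨j, hj⟩, Finset.sum_const, Finset.card_range, nsmul_eq_mul]
    rw [div_mul_eq_mul_div, div_eq_iff hcast]
    push_cast at hcast ⊢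
    field_simp
    ring
  rw [bartKT, if_neg (fun h => hj (by have := h j; omega)), if_neg (by omega), key]
/-- Theorem 8: non-recursive closed form for the two-level expansion `k^D_{D-2,γ}` of the
truncated BART sub-correlation function. If `n⁰ = 0` it equals `1`; otherwise it is given
by the explicit `O(p)` formula involving harmonic numbers (digamma differences). -/
theorem bartKT_depth_two_closed_form
    (p : ℕ) (hp : 1 ≤ p) (w : Fin p → ℝ) (hw : ∀ i, 0 < w i)
    (P : ℕ → ℝ) (hP : ∀ d, P d ∈ Set.Icc (0 : ℝ) 1)
    (D : ℕ) (hD : 2 ≤ D) (γ : ℝ) (hγ : γ ∈ Set.Icc (0 : ℝ) 1)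
    (nm n0 np : Fin p → ℕ) :
    (n0 = 0 → bartKT p w P D γ (D - 2) nm n0 np = 1) ∧
    (n0 ≠ 0 →
      bartKT p w P D γ (D - 2) nm n0 np =
        1 - P (D - 2) * (1 - (1 / bartW p w (fun j => nm j + n0 j + np j)) * (
          (1 - P (D - 1)) *
            (∑ i ∈ Finset.univ.filter (fun i => nm i + n0 i + np i ≠ 0),
              w i * (1 - (n0 i : ℝ) / ((nm i + n0 i + np i : ℕ) : ℝ))) +
          P (D - 1) * (1 - (1 - γ) * P D) *
            ∑ i ∈ Finset.univ.filter (fun i => nm i + n0 i + np i ≠ 0),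
              (w i / ((nm i + n0 i + np i : ℕ) : ℝ)) * (
                ((∑ j ∈ Finset.univ.filter (fun j => nm j + n0 j + np j ≠ 0),
                    w j * (1 - (n0 j : ℝ) / ((nm j + n0 j + np j : ℕ) : ℝ))) +
                  w i * (n0 i : ℝ) / ((nm i + n0 i + np i : ℕ) : ℝ)) *
                  (1 / bartW p w
                      (Function.update (fun j => nm j + n0 j + np j) i (n0 i + np i)) +
                   1 / bartW p w
                      (Function.update (fun j => nm j + n0 j + np j) i (n0 i + nm i)) +
                   ((nm i : ℝ) + (np i : ℝ) - 2) /
                      bartW p w (fun j => nm j + n0 j + np j)) +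
                (w i / bartW p w
                    (Function.update (fun j => nm j + n0 j + np j) i (n0 i + np i))) *
                  ((if 0 < n0 i + np i then
                      (np i : ℝ) / ((n0 i + np i : ℕ) : ℝ) else 0) - 1) +
                (w i / bartW p w
                    (Function.update (fun j => nm j + n0 j + np j) i (n0 i + nm i))) *
                  ((if 0 < n0 i + nm i then
                      (nm i : ℝ) / ((n0 i + nm i : ℕ) : ℝ) else 0) - 1) -
                (w i * (n0 i : ℝ) / bartW p w (fun j => nm j + n0 j + np j)) *
                  ((harm (nm i + n0 i + np i - 1) - harm (n0 i + np i)) +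
                   (harm (nm i + n0 i + np i - 1) - harm (n0 i + nm i))))))) := by
  constructor
  · intro h
    subst h
    exact kt_n0_zero hw P D γ (fun i => rfl) (D - (D - 2)) (D - 2) le_rfl nm np
  · intro hne
    obtain ⟨j0, hj0⟩ : ∃ j, n0 j ≠ 0 := by
      by_contra h; push_neg at h; exact hne (funext h)
    have hS : bartT p w n0 (fun j => nm j + n0 j + np j)
        = ∑ j ∈ Finset.univ.filter (fun j => nm j + n0 j + np j ≠ 0),
            w j * (1 - (n0 j : ℝ) / ((nm j + n0 j + np j : ℕ) : ℝ)) := rfl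
    have hWne : bartW p w (fun j => nm j + n0 j + np j) ≠ 0 :=
      ne_of_gt (bartW_pos hw ⟨j0, by simp; omega⟩)
    have hperi : ∀ i ∈ Finset.univ.filter (fun i => nm i + n0 i + np i ≠ 0),
        (w i / ((nm i + n0 i + np i : ℕ) : ℝ)) *
          ((∑ k ∈ Finset.range (nm i),
              bartKT p w P D γ (D - 1) (Function.update nm i k) n0 np) +
           (∑ k ∈ Finset.range (np i),
              bartKT p w P D γ (D - 1) nm n0 (Function.update np i k)))
        = (1 - P (D - 1)) * (w i * (1 - (n0 i : ℝ) / ((nm i + n0 i + np i : ℕ) : ℝ)))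
          + (P (D - 1) * (1 - (1 - γ) * P D)) *
            ((w i / ((nm i + n0 i + np i : ℕ) : ℝ)) * (
                ((∑ j ∈ Finset.univ.filter (fun j => nm j + n0 j + np j ≠ 0),
                    w j * (1 - (n0 j : ℝ) / ((nm j + n0 j + np j : ℕ) : ℝ))) +
                  w i * (n0 i : ℝ) / ((nm i + n0 i + np i : ℕ) : ℝ)) *
                  (1 / bartW p w
                      (Function.update (fun j => nm j + n0 j + np j) i (n0 i + np i)) +
                   1 / bartW p w
                      (Function.update (fun j => nm j + n0 j + np j) i (n0 i + nm i)) +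
                   ((nm i : ℝ) + (np i : ℝ) - 2) /
                      bartW p w (fun j => nm j + n0 j + np j)) +
                (w i / bartW p w
                    (Function.update (fun j => nm j + n0 j + np j) i (n0 i + np i))) *
                  ((if 0 < n0 i + np i then
                      (np i : ℝ) / ((n0 i + np i : ℕ) : ℝ) else 0) - 1) +
                (w i / bartW p w
                    (Function.update (fun j => nm j + n0 j + np j) i (n0 i + nm i))) *
                  ((if 0 < n0 i + nm i then
                      (nm i : ℝ) / ((n0 i + nm i : ℕ) : ℝ) else 0) - 1) -
                (w i * (n0 i : ℝ) / bartW p w (fun j => nm j + n0 j + np j)) *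
                  ((harm (nm i + n0 i + np i - 1) - harm (n0 i + np i)) +
                   (harm (nm i + n0 i + np i - 1) - harm (n0 i + nm i))))) := by
      intro i hi
      have hvi : nm i + n0 i + np i ≠ 0 := (Finset.mem_filter.1 hi).2
      have hcast : ((nm i + n0 i + np i : ℕ) : ℝ) ≠ 0 := Nat.cast_ne_zero.2 hvi
      set S : ℝ := ∑ j ∈ Finset.univ.filter (fun j => nm j + n0 j + np j ≠ 0),
          w j * (1 - (n0 j : ℝ) / ((nm j + n0 j + np j : ℕ) : ℝ)) with hSdef
      set A : ℝ := S + w i * (n0 i : ℝ) / ((nm i + n0 i + np i : ℕ) : ℝ) with hAdef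
      set Wm : ℝ := bartW p w (Function.update (fun j => nm j + n0 j + np j) i (n0 i + np i))
        with hWmdef
      set Wp : ℝ := bartW p w (Function.update (fun j => nm j + n0 j + np j) i (n0 i + nm i))
        with hWpdef
      have hWmne : Wm ≠ 0 := by
        refine ne_of_gt (bartW_pos hw ?_)
        rcases eq_or_ne (n0 i + np i) 0 with h0 | h0
        · refine ⟨j0, ?_⟩
          have hji : j0 ≠ i := fun h => by subst h; omega
          rw [Function.update_of_ne hji]
          omega
        · exact ⟨i, by rw [Function.update_self]; exact h0⟩
      have hWpne : Wp ≠ 0 := by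
        refine ne_of_gt (bartW_pos hw ?_)
        rcases eq_or_ne (n0 i + nm i) 0 with h0 | h0
        · refine ⟨j0, ?_⟩
          have hji : j0 ≠ i := fun h => by subst h; omega
          rw [Function.update_of_ne hji]
          omega
        · exact ⟨i, by rw [Function.update_self]; exact h0⟩
      have hWWm : n0 i + np i ≠ 0 → Wm = bartW p w (fun j => nm j + n0 j + np j) := by
        intro h; rw [hWmdef, bartW_update hvi, if_neg h]
      have hWWp : n0 i + nm i ≠ 0 → Wp = bartW p w (fun j => nm j + n0 j + np j) := by
        intro h; rw [hWpdef, bartW_update hvi, if_neg h]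
      -- pointwise value of the depth-(D-1) recursion, nm side
      have hptm : ∀ k : ℕ, bartKT p w P D γ (D - 1) (Function.update nm i k) n0 np
          = (1 - P (D - 1)) + (P (D - 1) * (1 - (1 - γ) * P D)) *
              (if k + (n0 i + np i) = 0 then (A - w i) / Wm
               else (A - w i * (n0 i : ℝ) / ((k + (n0 i + np i) : ℕ) : ℝ)) /
                 bartW p w (fun j => nm j + n0 j + np j)) := by
        intro k
        rw [kt_depth_D_sub_one hw P (by omega) γ ⟨j0, hj0⟩]
        have hv1 : (fun j => Function.update nm i k j + n0 j + np j)
            = Function.update (fun j => nm j + n0 j + np j) i (k + (n0 i + np i)) := by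
          funext j
          rcases eq_or_ne j i with rfl | hj
          · simp [Function.update_self]; omega
          · simp [Function.update_of_ne hj]
        rw [hv1, bartW_update hvi, bartT_update hvi]
        rcases eq_or_ne (k + (n0 i + np i)) 0 with h0 | h0
        · have hn0i : n0 i = 0 := by omega
          have hWm0 : Wm = bartW p w (fun j => nm j + n0 j + np j) - w i := by
            rw [hWmdef, show n0 i + np i = 0 from by omega, bartW_update hvi, if_pos rfl]
          rw [if_pos h0, if_pos h0, if_pos h0, hWm0, hAdef, hn0i]
          push_cast
          rw [hS]
          ring
        · rw [if_neg h0, if_neg h0, if_neg h0, hAdef]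
          rw [hS]
          ring
      -- pointwise value, np side
      have hptp : ∀ k : ℕ, bartKT p w P D γ (D - 1) nm n0 (Function.update np i k)
          = (1 - P (D - 1)) + (P (D - 1) * (1 - (1 - γ) * P D)) *
              (if k + (n0 i + nm i) = 0 then (A - w i) / Wp
               else (A - w i * (n0 i : ℝ) / ((k + (n0 i + nm i) : ℕ) : ℝ)) /
                 bartW p w (fun j => nm j + n0 j + np j)) := by
        intro k
        rw [kt_depth_D_sub_one hw P (by omega) γ ⟨j0, hj0⟩]
        have hv1 : (fun j => nm j + n0 j + Function.update np i k j)
            = Function.update (fun j => nm j + n0 j + np j) i (k + (n0 i + nm i)) := by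
          funext j
          rcases eq_or_ne j i with rfl | hj
          · simp [Function.update_self]; omega
          · simp [Function.update_of_ne hj]
        rw [hv1, bartW_update hvi, bartT_update hvi]
        rcases eq_or_ne (k + (n0 i + nm i)) 0 with h0 | h0
        · have hn0i : n0 i = 0 := by omega
          have hWp0 : Wp = bartW p w (fun j => nm j + n0 j + np j) - w i := by
            rw [hWpdef, show n0 i + nm i = 0 from by omega, bartW_update hvi, if_pos rfl]
          rw [if_pos h0, if_pos h0, if_pos h0, hWp0, hAdef, hn0i]
          push_cast
          rw [hS]
          ring
        · rw [if_neg h0, if_neg h0, if_neg h0, hAdef]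
          rw [hS]
          ring
      have hF := side_sum A (w i) (bartW p w (fun j => nm j + n0 j + np j)) Wm
        hWne hWmne (n0 i) (np i) hWWm (nm i) (by omega)
      have hG := side_sum A (w i) (bartW p w (fun j => nm j + n0 j + np j)) Wp
        hWne hWpne (n0 i) (nm i) hWWp (np i) (by omega)
      rw [show n0 i + np i + nm i - 1 = nm i + n0 i + np i - 1 from by omega] at hF
      rw [show n0 i + nm i + np i - 1 = nm i + n0 i + np i - 1 from by omega] at hG
      have h5nm : (∑ k ∈ Finset.range (nm i),
          bartKT p w P D γ (D - 1) (Function.update nm i k) n0 np)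
          = ((nm i : ℕ) : ℝ) * (1 - P (D - 1)) + (P (D - 1) * (1 - (1 - γ) * P D)) *
            (A / Wm + A * (((nm i : ℕ) : ℝ) - 1) / bartW p w (fun j => nm j + n0 j + np j)
              + (w i / Wm) *
                ((if 0 < n0 i + np i then (np i : ℝ) / ((n0 i + np i : ℕ) : ℝ) else 0) - 1)
              - (w i * ((n0 i : ℕ) : ℝ) / bartW p w (fun j => nm j + n0 j + np j)) *
                (harm (nm i + n0 i + np i - 1) - harm (n0 i + np i))) := by
        simp only [hptm]
        rw [Finset.sum_add_distrib, Finset.sum_const, Finset.card_range, nsmul_eq_mul,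
          ← Finset.mul_sum, hF]
      have h5np : (∑ k ∈ Finset.range (np i),
          bartKT p w P D γ (D - 1) nm n0 (Function.update np i k))
          = ((np i : ℕ) : ℝ) * (1 - P (D - 1)) + (P (D - 1) * (1 - (1 - γ) * P D)) *
            (A / Wp + A * (((np i : ℕ) : ℝ) - 1) / bartW p w (fun j => nm j + n0 j + np j)
              + (w i / Wp) *
                ((if 0 < n0 i + nm i then (nm i : ℝ) / ((n0 i + nm i : ℕ) : ℝ) else 0) - 1)
              - (w i * ((n0 i : ℕ) : ℝ) / bartW p w (fun j => nm j + n0 j + np j)) *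
                (harm (nm i + n0 i + np i - 1) - harm (n0 i + nm i))) := by
        simp only [hptp]
        rw [Finset.sum_add_distrib, Finset.sum_const, Finset.card_range, nsmul_eq_mul,
          ← Finset.mul_sum, hG]
      rw [h5nm, h5np]
      have hexp : (1 : ℝ) - (n0 i : ℝ) / ((nm i + n0 i + np i : ℕ) : ℝ)
          = (((nm i : ℕ) : ℝ) + ((np i : ℕ) : ℝ)) / ((nm i + n0 i + np i : ℕ) : ℝ) := by
        rw [eq_div_iff hcast, sub_mul, one_mul, div_mul_cancel₀ _ hcast]
        push_cast
        ring
      rw [hexp]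
      ring
    rw [bartKT, if_neg (fun h => hj0 (by have := h j0; omega)), if_neg (by omega),
      show D - 2 + 1 = D - 1 from by omega,
      Finset.sum_congr rfl hperi, Finset.sum_add_distrib, ← Finset.mul_sum, ← Finset.mul_sum]
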